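/- Let γ ∈ [0,1), let K satisfy the standing kernel assumptions, and let ρ ∈ (γ,1). If h is a nonnegative Radon measure on [0,∞) with ∫_{[0,R]} dh ≤ R^{1−ρ} for all R > 0, then the function I[h](x) = ∫_0^x ∫_{x−y}^∞ (K(y,z)/z) dh(z) dh(y) is locally integrable on [0,∞): for every L < ∞ there is a constant C(L) with ∫_0^L I[h](x) dx ≤ C(L), and moreover ∫_B I[h](x) dx → 0 as the Lebesgue measure of B ⊆ [0,L] tends to 0. -/

import Mathlib

/-!
For `0 < y < x` the growth bound splits `K(y,z)/z` into `C y^γ z⁻¹ + C z^(γ-1)`, and summing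
over the dyadic shells `[2^k (x-y), 2^(k+1) (x-y))`, on which `h` has mass at most
`(2^(k+1) (x-y))^(1-ρ)`, bounds the inner integral by `D (L^γ (x-y)^(-ρ) + (x-y)^(γ-ρ))`.
This majorant is integrable in `x - y` because `ρ < 1`, so by Tonelli its double integral over
`0 < y < x ≤ L` is at most `h((0,L))` times its integral over `(0,L]`. The endpoint `y = x`
of the outer integral only matters at atoms of `h`, which are countably many and hence
Lebesgue-null. Smallness on sets `B` of small measure is the absolute continuity of the
integral of the majorant.
-/

open MeasureTheory Real Set Filter Topology ENNReal

noncomputable section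

namespace Smol

/-- Standing assumptions on the coagulation kernel `K`: continuity on `(0,∞)²`, symmetry,
nonnegativity, homogeneity of degree `γ` and the growth bound `K(x,y) ≤ C(x^γ + y^γ)`. -/
structure KernelHyp (K : ℝ → ℝ → ℝ) (γ C : ℝ) : Prop where
  cont : ContinuousOn (fun p : ℝ × ℝ => K p.1 p.2) (Ioi (0:ℝ) ×ˢ Ioi (0:ℝ))
  symm : ∀ x y : ℝ, 0 < x → 0 < y → K x y = K y x
  nonneg : ∀ x y : ℝ, 0 < x → 0 < y → 0 ≤ K x y
  homog : ∀ a x y : ℝ, 0 < a → 0 < x → 0 < y → K (a * x) (a * y) = a ^ γ * K x y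
  growth : ∀ x y : ℝ, 0 < x → 0 < y → K x y ≤ C * (x ^ γ + y ^ γ)

/-- `I[h](x) = ∫_0^x ∫_{x-y}^∞ (K(y,z)/z) dh(z) dh(y)`, as a lower integral. -/
def Ilin (K : ℝ → ℝ → ℝ) (μ : Measure ℝ) (x : ℝ) : ℝ≥0∞ :=
  ∫⁻ y in Ioc (0:ℝ) x, (∫⁻ z in Ici (x - y), ENNReal.ofReal (K y z / z) ∂μ) ∂μ

theorem exists_lintegral_Ici_rpow_le {μ : Measure ℝ} {ρ β : ℝ}
    (hbd : ∀ R > (0:ℝ), μ (Icc 0 R) ≤ ENNReal.ofReal (R ^ (1 - ρ)))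
    (hβρ : β < ρ) (hβ1 : β ≤ 1) :
    ∃ D ≥ (0:ℝ), ∀ a > (0:ℝ),
      ∫⁻ z in Ici a, ENNReal.ofReal (z ^ (β - 1)) ∂μ ≤ ENNReal.ofReal (D * a ^ (β - ρ)) := by
  set r : ℝ := 2 ^ (β - ρ)
  have hr0 : 0 < r := by positivity
  have hr1 : r < 1 := Real.rpow_lt_one_of_one_lt_of_neg one_lt_two (by linarith)
  have hr1' : 0 < 1 - r := sub_pos.2 hr1
  refine ⟨2 ^ (1 - ρ) * (1 - r)⁻¹, by positivity, fun a ha => ?_⟩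
  set c : ℝ := 2 ^ (1 - ρ) * a ^ (β - ρ)
  have shell (k : ℕ) : ∫⁻ z in Ico (2 ^ k * a) (2 ^ (k + 1) * a), ENNReal.ofReal (z ^ (β - 1)) ∂μ
      ≤ ENNReal.ofReal (c * r ^ k) := by
    set b : ℝ := 2 ^ k * a
    have hb : 0 < b := by positivity
    have hmass : μ (Ico b (2 ^ (k + 1) * a)) ≤ ENNReal.ofReal ((2 * b) ^ (1 - ρ)) :=
      (measure_mono (show Ico b (2 ^ (k + 1) * a) ⊆ Icc 0 (2 * b) from fun z hz =>
        ⟨hb.le.trans hz.1, by rw [pow_succ] at hz; linarith [hz.2]⟩)).trans (hbd _ (by positivity))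
    have hprod : b ^ (β - 1) * (2 * b) ^ (1 - ρ) = c * r ^ k := by
      rw [Real.mul_rpow zero_le_two hb.le, mul_left_comm, ← Real.rpow_add hb,
        Real.mul_rpow (by positivity) ha.le, ← Real.rpow_pow_comm zero_le_two]
      simp only [c, r]
      ring_nf
    calc ∫⁻ z in Ico b (2 ^ (k + 1) * a), ENNReal.ofReal (z ^ (β - 1)) ∂μ
        ≤ ∫⁻ _ in Ico b (2 ^ (k + 1) * a), ENNReal.ofReal (b ^ (β - 1)) ∂μ :=
          setLIntegral_mono' measurableSet_Ico fun z hz =>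
            ENNReal.ofReal_le_ofReal (Real.rpow_le_rpow_of_nonpos hb hz.1 (by linarith))
      _ ≤ ENNReal.ofReal (b ^ (β - 1)) * ENNReal.ofReal ((2 * b) ^ (1 - ρ)) := by
          rw [setLIntegral_const]; gcongr
      _ = ENNReal.ofReal (c * r ^ k) := by
          rw [← ENNReal.ofReal_mul (by positivity), hprod]
  have hcover : Ici a ⊆ ⋃ k : ℕ, Ico (2 ^ k * a) (2 ^ (k + 1) * a) := fun z hz => by
    obtain ⟨k, hk⟩ := exists_nat_pow_near ((one_le_div ha).2 hz) one_lt_two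
    exact mem_iUnion.2 ⟨k, by rwa [le_div_iff₀ ha, div_lt_iff₀ ha] at hk⟩
  calc ∫⁻ z in Ici a, ENNReal.ofReal (z ^ (β - 1)) ∂μ
      ≤ ∑' k : ℕ, ∫⁻ z in Ico (2 ^ k * a) (2 ^ (k + 1) * a), ENNReal.ofReal (z ^ (β - 1)) ∂μ :=
        (lintegral_mono_set hcover).trans (lintegral_iUnion_le _ _)
    _ ≤ ∑' k : ℕ, ENNReal.ofReal (c * r ^ k) := ENNReal.tsum_le_tsum shell
    _ = ENNReal.ofReal (c * (1 - r)⁻¹) := by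
        rw [← ENNReal.ofReal_tsum_of_nonneg (fun k => by positivity)
          ((summable_geometric_of_lt_one hr0.le hr1).mul_left c), tsum_mul_left,
          tsum_geometric_of_lt_one hr0.le hr1]
    _ = ENNReal.ofReal (2 ^ (1 - ρ) * (1 - r)⁻¹ * a ^ (β - ρ)) := by simp only [c]; ring_nf

theorem lintegral_Ioc_lintegral_Ioo_sub_le {μ : Measure ℝ} {L : ℝ} (hμ : μ (Ioo 0 L) ≠ ∞)
    {φ : ℝ → ℝ≥0∞} (hφ : Measurable φ) :
    ∫⁻ x in Ioc 0 L, ∫⁻ y in Ioo 0 x, φ (x - y) ∂μ ≤ μ (Ioo 0 L) * ∫⁻ t in Ioc 0 L, φ t := by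
  have : IsFiniteMeasure (μ.restrict (Ioo 0 L)) := isFiniteMeasure_restrict.2 hμ
  set G : ℝ → ℝ → ℝ≥0∞ := fun x y => (Ioc 0 L).indicator φ (x - y)
  have hG : Measurable (Function.uncurry G) :=
    (hφ.indicator measurableSet_Ioc).comp (measurable_fst.sub measurable_snd)
  have inner : ∀ x ∈ Ioc 0 L, ∫⁻ y in Ioo 0 x, φ (x - y) ∂μ ≤ ∫⁻ y in Ioo 0 L, G x y ∂μ := by
    intro x hx
    calc ∫⁻ y in Ioo 0 x, φ (x - y) ∂μ = ∫⁻ y in Ioo 0 x, G x y ∂μ :=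
          setLIntegral_congr_fun measurableSet_Ioo fun y hy =>
            (indicator_of_mem (show x - y ∈ Ioc 0 L from
              ⟨by linarith [hy.2], by linarith [hy.1, hx.2]⟩) φ).symm
      _ ≤ ∫⁻ y in Ioo 0 L, G x y ∂μ := lintegral_mono_set (Ioo_subset_Ioo_right hx.2)
  calc ∫⁻ x in Ioc 0 L, ∫⁻ y in Ioo 0 x, φ (x - y) ∂μ
      ≤ ∫⁻ x, ∫⁻ y in Ioo 0 L, G x y ∂μ :=
        (setLIntegral_mono' measurableSet_Ioc inner).trans (setLIntegral_le_lintegral _ _)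
    _ = ∫⁻ y in Ioo 0 L, (∫⁻ x, G x y) ∂μ := lintegral_lintegral_swap hG.aemeasurable
    _ = ∫⁻ _ in Ioo 0 L, (∫⁻ t in Ioc 0 L, φ t) ∂μ := by
        simp only [G, lintegral_sub_right_eq_self (fun t => (Ioc 0 L).indicator φ t),
          lintegral_indicator measurableSet_Ioc]
    _ = μ (Ioo 0 L) * ∫⁻ t in Ioc 0 L, φ t := by rw [setLIntegral_const, mul_comm]

theorem ae_measure_singleton_eq_zero_of_mem {α : Type*} [MeasurableSpace α]
    [MeasurableSingletonClass α] {μ ν : Measure α} [NullSingletonClass ν] {s : Set α} (hs : μ s ≠ ∞) :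
    ∀ᵐ x ∂ν, x ∈ s → μ {x} = 0 := by
  have : IsFiniteMeasure (μ.restrict s) := isFiniteMeasure_restrict.2 hs
  have hatoms : {x | 0 < μ.restrict s {x}}.Countable :=
    Measure.countable_meas_pos_of_disjoint_iUnion (fun _ => measurableSet_singleton _)
      fun _ _ hxy => disjoint_singleton.2 hxy
  filter_upwards [measure_eq_zero_iff_ae_notMem.1 (hatoms.measure_zero ν)] with x hx hxs
  simpa [Measure.restrict_apply (measurableSet_singleton x), singleton_inter_of_mem hxs]
    using hx

theorem Ilin_le_of_measure_singleton {K : ℝ → ℝ → ℝ} {μ : Measure ℝ} {x : ℝ}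
    {φ : ℝ → ℝ≥0∞} (hx : μ {x} = 0)
    (hφ : ∀ y ∈ Ioo 0 x, ∫⁻ z in Ici (x - y), ENNReal.ofReal (K y z / z) ∂μ ≤ φ (x - y)) :
    Ilin K μ x ≤ ∫⁻ y in Ioo 0 x, φ (x - y) ∂μ := by
  rw [Ilin, ← setLIntegral_congr (Ioo_ae_eq_Ioc' hx)]
  exact setLIntegral_mono' measurableSet_Ioo hφ

theorem exists_pos_setLIntegral_le_of_ae_le {α : Type*} [MeasurableSpace α] {μ : Measure α}
    {f g : α → ℝ≥0∞} {S : Set α} (hfg : ∀ᵐ x ∂μ, x ∈ S → f x ≤ g x)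
    (hg : ∫⁻ x in S, g x ∂μ ≠ ∞) {ε : ℝ} (hε : 0 < ε) :
    ∃ δ > (0:ℝ), ∀ B ⊆ S, MeasurableSet B → μ B ≤ ENNReal.ofReal δ →
      ∫⁻ x in B, f x ∂μ ≤ ENNReal.ofReal ε := by
  obtain ⟨δ, hδ, habs⟩ := exists_pos_setLIntegral_lt_of_measure_lt hg (ENNReal.ofReal_pos.2 hε).ne'
  obtain ⟨r, -, hr0, hrδ⟩ := ENNReal.lt_iff_exists_real_btwn.1 hδ
  refine ⟨r, ENNReal.ofReal_pos.1 hr0, fun B hBS hB hBr => ?_⟩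
  have hBδ : μ.restrict S B < δ := (Measure.restrict_apply_le _ _).trans_lt (hBr.trans_lt hrδ)
  calc ∫⁻ x in B, f x ∂μ ≤ ∫⁻ x in B, g x ∂μ :=
        setLIntegral_mono_ae' hB (hfg.mono fun x h hxB => h (hBS hxB))
    _ = ∫⁻ x in B, g x ∂μ.restrict S := by
        rw [Measure.restrict_restrict hB, inter_eq_left.2 hBS]
    _ ≤ ENNReal.ofReal ε := (habs B hBδ).le

theorem KernelHyp.div_le {K : ℝ → ℝ → ℝ} {γ C : ℝ} (hK : KernelHyp K γ C) {y z : ℝ}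
    (hy : 0 < y) (hz : 0 < z) : K y z / z ≤ C * y ^ γ * z⁻¹ + C * z ^ (γ - 1) := by
  rw [Real.rpow_sub_one hz.ne']
  calc K y z / z ≤ C * (y ^ γ + z ^ γ) / z :=
        div_le_div_of_nonneg_right (hK.growth y z hy hz) hz.le
    _ = C * y ^ γ * z⁻¹ + C * (z ^ γ / z) := by ring

theorem KernelHyp.exists_lintegral_Ici_div_le {K : ℝ → ℝ → ℝ} {γ C ρ : ℝ} {μ : Measure ℝ}
    (hK : KernelHyp K γ C) (hC : 0 ≤ C)
    (hbd : ∀ R > (0:ℝ), μ (Icc 0 R) ≤ ENNReal.ofReal (R ^ (1 - ρ)))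
    (hρ0 : 0 < ρ) (hγρ : γ < ρ) (hρ1 : ρ < 1) :
    ∃ D ≥ (0:ℝ), ∀ y > (0:ℝ), ∀ a > (0:ℝ), ∫⁻ z in Ici a, ENNReal.ofReal (K y z / z) ∂μ ≤
      ENNReal.ofReal (D * (y ^ γ * a ^ (-ρ) + a ^ (γ - ρ))) := by
  obtain ⟨D₀, hD₀, hT₀⟩ := exists_lintegral_Ici_rpow_le hbd hρ0 zero_le_one
  obtain ⟨D₁, hD₁, hT₁⟩ := exists_lintegral_Ici_rpow_le hbd hγρ (by linarith)
  simp only [zero_sub, Real.rpow_neg_one] at hT₀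
  refine ⟨C * (D₀ + D₁), by positivity, fun y hy a ha => ?_⟩
  have hpt : ∀ z ∈ Ici a, ENNReal.ofReal (K y z / z) ≤
      ENNReal.ofReal (C * y ^ γ) * ENNReal.ofReal z⁻¹ +
        ENNReal.ofReal C * ENNReal.ofReal (z ^ (γ - 1)) := by
    intro z hz
    have hz0 : 0 < z := ha.trans_le hz
    rw [← ENNReal.ofReal_mul (by positivity), ← ENNReal.ofReal_mul hC,
      ← ENNReal.ofReal_add (by positivity) (by positivity)]
    exact ENNReal.ofReal_le_ofReal (hK.div_le hy hz0)
  have hu : 0 ≤ y ^ γ * a ^ (-ρ) := by positivity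
  have hv : 0 ≤ a ^ (γ - ρ) := by positivity
  calc ∫⁻ z in Ici a, ENNReal.ofReal (K y z / z) ∂μ
      ≤ ∫⁻ z in Ici a, (ENNReal.ofReal (C * y ^ γ) * ENNReal.ofReal z⁻¹ +
          ENNReal.ofReal C * ENNReal.ofReal (z ^ (γ - 1))) ∂μ :=
        setLIntegral_mono' measurableSet_Ici hpt
    _ = ENNReal.ofReal (C * y ^ γ) * ∫⁻ z in Ici a, ENNReal.ofReal z⁻¹ ∂μ +
          ENNReal.ofReal C * ∫⁻ z in Ici a, ENNReal.ofReal (z ^ (γ - 1)) ∂μ := by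
        rw [lintegral_add_left (by fun_prop), lintegral_const_mul' _ _ ENNReal.ofReal_ne_top,
          lintegral_const_mul' _ _ ENNReal.ofReal_ne_top]
    _ ≤ ENNReal.ofReal (C * y ^ γ) * ENNReal.ofReal (D₀ * a ^ (-ρ)) +
          ENNReal.ofReal C * ENNReal.ofReal (D₁ * a ^ (γ - ρ)) := by
        gcongr
        exacts [hT₀ a ha, hT₁ a ha]
    _ = ENNReal.ofReal (C * D₀ * (y ^ γ * a ^ (-ρ)) + C * D₁ * a ^ (γ - ρ)) := by
        rw [← ENNReal.ofReal_mul (by positivity), ← ENNReal.ofReal_mul hC,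
          ← ENNReal.ofReal_add (by positivity) (by positivity)]
        ring_nf
    _ ≤ ENNReal.ofReal (C * (D₀ + D₁) * (y ^ γ * a ^ (-ρ) + a ^ (γ - ρ))) :=
        ENNReal.ofReal_le_ofReal (by
          nlinarith [mul_nonneg (mul_nonneg hC hD₁) hu, mul_nonneg (mul_nonneg hC hD₀) hv])

theorem lintegral_Ioc_ofReal_rpow_ne_top {e e' : ℝ} (he : -1 < e) (he' : -1 < e')
    (D c a b : ℝ) : ∫⁻ t in Ioc a b, ENNReal.ofReal (D * (c * t ^ e + t ^ e')) ≠ ∞ :=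
  ((((intervalIntegral.intervalIntegrable_rpow' he).const_mul c).add
    (intervalIntegral.intervalIntegrable_rpow' he')).const_mul D).1.lintegral_lt_top.ne

theorem Ih_locally_integrable_general
    (γ C ρ : ℝ) (K : ℝ → ℝ → ℝ)
    (hγ : γ ∈ Ico (0:ℝ) 1) (hC : 0 < C) (hK : KernelHyp K γ C) (hρ : ρ ∈ Ioo γ 1)
    (μ : Measure ℝ)
    (hbd : ∀ R > (0:ℝ), μ (Icc 0 R) ≤ ENNReal.ofReal (R ^ (1 - ρ))) :
    ∀ L > (0:ℝ),
      (∃ CL : ℝ, ∫⁻ x in Ioc (0:ℝ) L, Ilin K μ x ≤ ENNReal.ofReal CL) ∧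
      (∀ ε > (0:ℝ), ∃ δ > (0:ℝ), ∀ B : Set ℝ, B ⊆ Icc (0:ℝ) L → MeasurableSet B →
        volume B ≤ ENNReal.ofReal δ →
        ∫⁻ x in B, Ilin K μ x ≤ ENNReal.ofReal ε) := by
  intro L hL
  obtain ⟨D, hD0, hD⟩ :=
    hK.exists_lintegral_Ici_div_le hC.le hbd (hγ.1.trans_lt hρ.1) hρ.1 hρ.2
  set φ : ℝ → ℝ≥0∞ := fun t => ENNReal.ofReal (D * (L ^ γ * t ^ (-ρ) + t ^ (γ - ρ)))
  set g : ℝ → ℝ≥0∞ := fun x => ∫⁻ y in Ioo 0 x, φ (x - y) ∂μ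
  have hμL : μ (Icc 0 L) ≠ ∞ := ((hbd L hL).trans_lt ENNReal.ofReal_lt_top).ne
  have hdom : ∀ᵐ x, x ∈ Icc 0 L → Ilin K μ x ≤ g x := by
    filter_upwards [ae_measure_singleton_eq_zero_of_mem hμL] with x hx hxL
    refine Ilin_le_of_measure_singleton (hx hxL) fun y hy =>
      (hD y hy.1 _ (sub_pos.2 hy.2)).trans (ENNReal.ofReal_le_ofReal ?_)
    have hyL : y ^ γ ≤ L ^ γ := Real.rpow_le_rpow hy.1.le (hy.2.le.trans hxL.2) hγ.1
    have hxy : 0 ≤ (x - y) ^ (-ρ) := Real.rpow_nonneg (sub_nonneg.2 hy.2.le) _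
    gcongr
  have hg : ∫⁻ x in Icc 0 L, g x ≠ ∞ := by
    have hμL' : μ (Ioo 0 L) ≠ ∞ := ne_top_of_le_ne_top hμL (measure_mono Ioo_subset_Icc_self)
    rw [← setLIntegral_congr Ioc_ae_eq_Icc]
    refine ne_top_of_le_ne_top (ENNReal.mul_ne_top hμL' ?_)
      (lintegral_Ioc_lintegral_Ioo_sub_le hμL' (by fun_prop))
    exact lintegral_Ioc_ofReal_rpow_ne_top (by linarith [hρ.2]) (by linarith [hγ.1, hρ.2]) _ _ _ _
  refine ⟨⟨(∫⁻ x in Icc 0 L, g x).toReal, ?_⟩,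
    fun ε hε => exists_pos_setLIntegral_le_of_ae_le hdom hg hε⟩
  calc ∫⁻ x in Ioc 0 L, Ilin K μ x ≤ ∫⁻ x in Icc 0 L, Ilin K μ x :=
        lintegral_mono_set Ioc_subset_Icc_self
    _ ≤ ∫⁻ x in Icc 0 L, g x := setLIntegral_mono_ae' measurableSet_Icc hdom
    _ = _ := (ENNReal.ofReal_toReal hg).symm

/-- Local integrability of `I[h]`: if `∫_{[0,R]} dh ≤ R^{1-ρ}` for all `R > 0`, then
`∫_0^L I[h] ≤ C(L)` for every `L`, and `∫_B I[h] → 0` as `|B| → 0`, `B ⊆ [0,L]`. -/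
theorem Ih_locally_integrable
    (γ C ρ : ℝ) (K : ℝ → ℝ → ℝ)
    (hγ : γ ∈ Ico (0:ℝ) 1) (hC : 0 < C) (hK : KernelHyp K γ C) (hρ : ρ ∈ Ioo γ 1)
    (μ : Measure ℝ) (hsupp : μ (Iio 0) = 0)
    (hbd : ∀ R > (0:ℝ), μ (Icc 0 R) ≤ ENNReal.ofReal (R ^ (1 - ρ))) :
    ∀ L > (0:ℝ),
      (∃ CL : ℝ, ∫⁻ x in Ioc (0:ℝ) L, Ilin K μ x ≤ ENNReal.ofReal CL) ∧
      (∀ ε > (0:ℝ), ∃ δ > (0:ℝ), ∀ B : Set ℝ, B ⊆ Icc (0:ℝ) L → MeasurableSet B →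
        volume B ≤ ENNReal.ofReal δ →
        ∫⁻ x in B, Ilin K μ x ≤ ENNReal.ofReal ε) :=
  Ih_locally_integrable_general γ C ρ K hγ hC hK hρ μ hbd

end Smol
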